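/- arXiv:0804.4210 — 2 statements merged into one kernel-verified Lean document; each statement's English description precedes it below -/
import Mathlib

section
/- Let (λₙ) be a sequence of nonzero complex numbers with ∑|λₙ| < ∞, and define f(z) = ∏ₙ(1 - zλₙ). Then f is entire, and for every positive integer n and every z not equal to any λₖ⁻¹, one has (-1)ⁿ f⁽ⁿ⁾(z)/(n! f(z)) = ∑_{k₁<k₂<⋯<kₙ} ∏_{j=1}^{n} λ_{k_j}/(1 - z λ_{k_j}). -/
/-!
Around a point `z` where no factor vanishes, the partial products `P_t(z) = ∏_{i ∈ t} (1 - z λᵢ)`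
factor as `P_t(z + w) = P_t(z) ∏_{i ∈ t} (1 - w gᵢ)` with `gᵢ = λᵢ / (1 - z λᵢ)`, a polynomial in
`w` whose `wⁿ`-coefficient is `(-1)ⁿ P_t(z) eₙ(g)`. This gives the formula for every finite `t`.
Both sides then pass to the limit `t → ∞`: the partial products converge locally uniformly, hence
so do all their derivatives (Weierstrass), and `s ↦ ∏_{i ∈ s} gᵢ` is summable over finite sets.
-/

open Finset Filter Topology
open scoped Nat

section FiniteProduct

variable {ι : Type*}

theorem prod_one_sub_add_mul_eq_sum {K : Type*} [Field K] (t : Finset ι) (lam : ι → K) {z : K}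
    (hz : ∀ i ∈ t, 1 - z * lam i ≠ 0) (w : K) :
    ∏ i ∈ t, (1 - (z + w) * lam i) = ∑ s ∈ t.powerset,
      (∏ i ∈ t, (1 - z * lam i)) * (-1) ^ #s * (∏ i ∈ s, lam i / (1 - z * lam i)) * w ^ #s := by
  have hfactor : ∀ i ∈ t, 1 - (z + w) * lam i
      = (1 - z * lam i) * (1 + -w * (lam i / (1 - z * lam i))) := fun i hi => by
    field_simp [hz i hi]
    ring
  rw [prod_congr rfl hfactor, prod_mul_distrib, prod_one_add, mul_sum]
  refine sum_congr rfl fun s _ => ?_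
  rw [prod_mul_distrib, prod_const, neg_pow]
  ring

variable {𝕜 : Type*} [NontriviallyNormedField 𝕜]

theorem iteratedDeriv_sum_mul_pow_zero (S : Finset ι) (c : ι → 𝕜) (d : ι → ℕ) (n : ℕ) :
    iteratedDeriv n (fun w => ∑ i ∈ S, c i * w ^ d i) 0 = n ! * ∑ i ∈ S with d i = n, c i := by
  rw [iteratedDeriv_fun_sum fun i _ => by fun_prop, sum_filter, mul_sum]
  refine sum_congr rfl fun i _ => ?_
  rw [iteratedDeriv_const_mul_field, iteratedDeriv_fun_pow_zero]
  rcases eq_or_ne (d i) n with h | h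
  · simp [h, mul_comm]
  · simp [h, h.symm]

theorem neg_one_pow_mul_iteratedDeriv_prod_one_sub_mul_div [CharZero 𝕜] (t : Finset ι)
    (lam : ι → 𝕜) (n : ℕ) {z : 𝕜} (hz : ∀ i ∈ t, 1 - z * lam i ≠ 0) :
    (-1) ^ n * iteratedDeriv n (fun z => ∏ i ∈ t, (1 - z * lam i)) z
        / (n ! * ∏ i ∈ t, (1 - z * lam i))
      = ∑ s ∈ t.powersetCard n, ∏ i ∈ s, lam i / (1 - z * lam i) := by
  have hshift := congrFun (iteratedDeriv_comp_const_add n (fun z => ∏ i ∈ t, (1 - z * lam i)) z) 0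
  simp only [add_zero] at hshift
  rw [div_eq_iff (mul_ne_zero (Nat.cast_ne_zero.2 n.factorial_ne_zero) (prod_ne_zero_iff.2 hz)),
    ← hshift]
  simp only [prod_one_sub_add_mul_eq_sum t lam hz, iteratedDeriv_sum_mul_pow_zero,
    powersetCard_eq_filter, mul_sum, sum_mul]
  refine sum_congr rfl fun s hs => ?_
  rw [(mem_filter.1 hs).2]
  have hsign : ((-1 : 𝕜) ^ n) * (-1) ^ n = 1 := by rw [← mul_pow]; simp
  linear_combination
    (n ! * (∏ i ∈ t, (1 - z * lam i)) * ∏ i ∈ s, lam i / (1 - z * lam i)) * hsign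

end FiniteProduct

theorem TendstoLocallyUniformlyOn.iteratedDeriv {ι : Type*} {l : Filter ι} {U : Set ℂ}
    {F : ι → ℂ → ℂ} {f : ℂ → ℂ} (hf : TendstoLocallyUniformlyOn F f l U)
    (hF : ∀ᶠ i in l, DifferentiableOn ℂ (F i) U) (hU : IsOpen U) (n : ℕ) :
    TendstoLocallyUniformlyOn (fun i => iteratedDeriv n (F i)) (iteratedDeriv n f) l U := by
  induction n generalizing F f with
  | zero => simpa only [iteratedDeriv_zero] using hf
  | succ n ih =>
    simp only [iteratedDeriv_succ']
    exact ih (hf.deriv hF hU) (by filter_upwards [hF] with i hi using hi.deriv hU)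

theorem tendsto_sum_powersetCard {ι E : Type*} [NormedAddCommGroup E] [CompleteSpace E]
    {a : Finset ι → E} (ha : Summable a) (n : ℕ) :
    Tendsto (fun t : Finset ι => ∑ s ∈ t.powersetCard n, a s) atTop
      (𝓝 (∑' s : {s : Finset ι // #s = n}, a s)) := by
  rw [show ∑' s : {s : Finset ι // #s = n}, a s = _ from tsum_subtype {s | #s = n} a]
  refine ((ha.indicator _).hasSum.comp tendsto_finset_powerset_atTop_atTop).congr fun t => ?_
  simp [powersetCard_eq_filter, sum_filter, Set.indicator_apply]

section InfiniteProduct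

variable {ι : Type*}

theorem hasProdLocallyUniformlyOn_one_sub_mul {lam : ι → ℂ} (hlam : Summable fun i => ‖lam i‖) :
    HasProdLocallyUniformlyOn (fun i z => 1 - z * lam i) (fun z => ∏' i, (1 - z * lam i))
      Set.univ := by
  simp_rw [sub_eq_add_neg]
  refine hasProdLocallyUniformlyOn_of_forall_compact isOpen_univ fun K _ hK => ?_
  obtain ⟨R, hR⟩ := hK.isBounded.exists_norm_le
  refine (hlam.mul_left R).hasProdUniformlyOn_one_add hK (.of_forall fun i z hz => ?_)
    fun i => by fun_prop
  rw [norm_neg, norm_mul]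
  exact mul_le_mul_of_nonneg_right (hR z hz) (norm_nonneg _)

variable {R : Type*} [NormedCommRing R] [NormOneClass R] [NormMulClass R] [CompleteSpace R]

theorem tprod_one_sub_mul_ne_zero {lam : ι → R} (hlam : Summable fun i => ‖lam i‖) {z : R}
    (hz : ∀ i, 1 - z * lam i ≠ 0) : ∏' i, (1 - z * lam i) ≠ 0 := by
  simpa [sub_eq_add_neg] using tprod_one_add_ne_zero_of_summable (f := fun i => -(z * lam i))
    (by simpa [sub_eq_add_neg] using hz) (by simpa using hlam.mul_left ‖z‖)

theorem summable_norm_div_one_sub_mul {𝕜 : Type*} [NormedField 𝕜] {lam : ι → 𝕜}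
    (hlam : Summable fun i => ‖lam i‖) (z : 𝕜) :
    Summable fun i => ‖lam i / (1 - z * lam i)‖ := by
  have hlam0 : Tendsto lam cofinite (𝓝 0) :=
    tendsto_zero_iff_norm_tendsto_zero.2 hlam.tendsto_cofinite_zero
  have hlim : Tendsto (fun i => (1 - z * lam i)⁻¹) cofinite (𝓝 1) := by
    simpa using ((hlam0.const_mul z).const_sub 1).inv₀ (by simp)
  refine summable_of_isBigO hlam ?_
  simpa [div_eq_mul_inv] using
    ((Asymptotics.isBigO_refl lam cofinite).mul (hlim.isBigO_one 𝕜)).norm_left.norm_right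

end InfiniteProduct

theorem sum_zeros_log_deriv_general (lam : ℕ → ℂ)
    (hsum : Summable fun n => ‖lam n‖)
    (f : ℂ → ℂ) (hf : ∀ z, f z = ∏' n, (1 - z * lam n)) :
    Differentiable ℂ f ∧
      ∀ n : ℕ, 0 < n → ∀ z : ℂ, (∀ k, z ≠ (lam k)⁻¹) →
        (-1 : ℂ) ^ n * iteratedDeriv n f z / ((n.factorial : ℂ) * f z) =
          ∑' s : {s : Finset ℕ // s.card = n},
            ∏ i ∈ s.1, lam i / (1 - z * lam i) := by
  obtain rfl : f = fun z => ∏' n, (1 - z * lam n) := funext hf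
  have hprod := hasProdLocallyUniformlyOn_one_sub_mul hsum
  have hpartial : ∀ᶠ t in atTop, DifferentiableOn ℂ (fun z => ∏ i ∈ t, (1 - z * lam i)) .univ :=
    .of_forall fun t => by fun_prop
  refine ⟨differentiableOn_univ.1 (hprod.differentiableOn hpartial isOpen_univ), ?_⟩
  intro n _ z hz
  have hfactor : ∀ i, 1 - z * lam i ≠ 0 := fun i h =>
    hz i (eq_inv_of_mul_eq_one_left (by linear_combination -h))
  have hderiv := (hprod.iteratedDeriv hpartial isOpen_univ n).tendsto_at (Set.mem_univ z)
  have hvalue := hprod.tendsto_at (Set.mem_univ z)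
  have hdenom : (n ! : ℂ) * ∏' i, (1 - z * lam i) ≠ 0 :=
    mul_ne_zero (Nat.cast_ne_zero.2 n.factorial_ne_zero) (tprod_one_sub_mul_ne_zero hsum hfactor)
  have hsummable := summable_finsetProd_of_summable_norm (summable_norm_div_one_sub_mul hsum z)
  refine tendsto_nhds_unique ((hderiv.const_mul _).div (hvalue.const_mul _) hdenom)
    ((tendsto_sum_powersetCard hsummable n).congr fun t => ?_)
  exact (neg_one_pow_mul_iteratedDeriv_prod_one_sub_mul_div t lam n fun i _ => hfactor i).symm

/-- Theorem 3.1, first part: for a sequence of nonzero complex numbers `lam` with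
`∑ ‖lam n‖ < ∞`, the function `f z = ∏ (1 - z * lam n)` is entire and its higher
logarithmic derivatives are given by multiple sums over strictly increasing index
tuples (equivalently, finite index sets of cardinality `n`). -/
theorem sum_zeros_log_deriv (lam : ℕ → ℂ) (hne : ∀ n, lam n ≠ 0)
    (hsum : Summable fun n => ‖lam n‖)
    (f : ℂ → ℂ) (hf : ∀ z, f z = ∏' n, (1 - z * lam n)) :
    Differentiable ℂ f ∧
      ∀ n : ℕ, 0 < n → ∀ z : ℂ, (∀ k, z ≠ (lam k)⁻¹) →
        (-1 : ℂ) ^ n * iteratedDeriv n f z / ((n.factorial : ℂ) * f z) =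
          ∑' s : {s : Finset ℕ // s.card = n},
            ∏ i ∈ s.1, lam i / (1 - z * lam i) :=
  sum_zeros_log_deriv_general lam hsum f hf
end

section
/- For every positive integer n, the multiple sum ∑_{1 ≤ k₁ < k₂ < ⋯ < kₙ} 1/(k₁² k₂² ⋯ kₙ²) equals π^{2n}/(2n+1)!. -/
/-!
Expanding Euler's product `sinh (π x) / (π x) = ∏ (1 + x² / k²)` over finite sets of factors and
grouping the sets by cardinality gives `∑ₙ eₙ x²ⁿ`, where `eₙ` is the multiple sum of the theorem;
the Taylor series of `sinh` gives `∑ₙ π²ⁿ x²ⁿ / (2n+1)!`. For positive `x` all terms are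
nonnegative, so both are convergent power series in `t = x²` with the same sum on `(0, 1)`, and the
identity theorem forces equal coefficients.
-/

open Filter Finset Real Topology

theorem hasSum_finsetProd_of_summable_nonneg {ι : Type*} {f : ι → ℝ} (hf : ∀ i, 0 ≤ f i)
    (hfs : Summable f) : HasSum (fun s : Finset ι ↦ ∏ i ∈ s, f i) (∏' i, (1 + f i)) := by
  rw [tprod_one_add (summable_finsetProd_of_summable_nonneg hf hfs)]
  exact (summable_finsetProd_of_summable_nonneg hf hfs).hasSum

theorem hasSum_tsum_finsetProd_card_mul_pow {ι : Type*} {w : ι → ℝ} (hw : ∀ i, 0 ≤ w i)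
    (hws : Summable w) {t : ℝ} (ht : 0 ≤ t) :
    HasSum (fun n ↦ (∑' s : {s : Finset ι // s.card = n}, ∏ i ∈ s.1, w i) * t ^ n)
      (∏' i, (1 + t * w i)) := by
  refine ((hasSum_finsetProd_of_summable_nonneg (fun i ↦ mul_nonneg ht (hw i))
    (hws.mul_left t)).tsum_fiberwise Finset.card).congr_fun fun n ↦ ?_
  rw [← tsum_mul_right]
  refine tsum_congr fun s ↦ ?_
  rw [prod_mul_distrib, prod_const, s.2, mul_comm]

theorem hasProd_euler_sinh {x : ℝ} (hx : x ≠ 0) :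
    HasProd (fun i : ℕ ↦ 1 + x ^ 2 / ((i : ℝ) + 1) ^ 2) (sinh (π * x) / (π * x)) := by
  have hsum : Summable fun i : ℕ ↦ x ^ 2 / ((i : ℝ) + 1) ^ 2 := by
    simpa only [Nat.cast_one] using (summable_pow_div_add (x ^ 2) 2 1 Nat.one_lt_two).of_norm
  rw [(Real.multipliable_one_add_of_summable hsum).hasProd_iff_tendsto_nat,
    ← Filter.tendsto_ofReal_iff]
  have hxI : (x : ℂ) * Complex.I ≠ 0 := mul_ne_zero (Complex.ofReal_ne_zero.2 hx) Complex.I_ne_zero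
  convert tendsto_euler_sin_prod' hxI using 2 with n
  · push_cast
    refine prod_congr rfl fun i _ ↦ ?_
    simp [sineTerm, mul_pow]
  · rw [← mul_assoc, Complex.sin_mul_I]
    push_cast
    field_simp

theorem hasSum_sinh_div_self {y : ℝ} (hy : y ≠ 0) :
    HasSum (fun n ↦ y ^ (2 * n) / ((2 * n + 1).factorial : ℝ)) (sinh y / y) := by
  refine ((Real.hasSum_sinh y).div_const y).congr_fun fun n ↦ ?_
  rw [pow_succ, div_div, mul_div_mul_right _ _ hy]

theorem eq_of_hasSum_mul_pow_eq {a b : ℕ → ℝ} {f : ℝ → ℝ} {r : ℝ} (hr : 0 < r)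
    (ha : ∀ t ∈ Set.Ioo 0 r, HasSum (fun n ↦ a n * t ^ n) (f t))
    (hb : ∀ t ∈ Set.Ioo 0 r, HasSum (fun n ↦ b n * t ^ n) (f t)) : a = b := by
  set p := FormalMultilinearSeries.ofScalars ℝ (a - b)
  have hzero : ∀ t ∈ Set.Ioo 0 r, HasSum (fun n ↦ (a - b) n * t ^ n) 0 := fun t ht ↦ by
    simpa [sub_mul] using (ha t ht).sub (hb t ht)
  have hradius : 0 < p.radius := by
    lift r to NNReal using hr.le
    have hs := (hzero (r / 2) ⟨by positivity, by linarith⟩).summable.abs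
    refine lt_of_lt_of_le ?_ (p.le_radius_of_summable (r := r / 2) ?_)
    · simpa using hr.ne'
    · simpa [p, FormalMultilinearSeries.ofScalars_norm, abs_mul, abs_div] using hs
  have hp : HasFPowerSeriesAt p.sum p 0 := (p.hasFPowerSeriesOnBall hradius).hasFPowerSeriesAt
  have hsum_zero : p.sum =ᶠ[𝓝 0] 0 := by
    refine hp.analyticAt.frequently_zero_iff_eventually_zero.1 ?_
    refine (Eventually.frequently ?_).filter_mono (nhdsGT_le_nhdsNE 0)
    filter_upwards [Ioo_mem_nhdsGT hr] with t ht
    change FormalMultilinearSeries.ofScalarsSum (a - b) t = 0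
    simpa [FormalMultilinearSeries.ofScalars_sum_eq] using (hzero t ht).tsum_eq
  simpa [p, sub_eq_zero] using hp.eq_zero_of_eventually hsum_zero

theorem multiple_sum_inv_squares_general (n : ℕ) :
    ∑' s : {s : Finset ℕ // s.card = n}, ∏ i ∈ s.1, (1 : ℝ) / ((i : ℝ) + 1) ^ 2 =
      Real.pi ^ (2 * n) / ((2 * n + 1).factorial : ℝ) := by
  suffices h : (fun n ↦ ∑' s : {s : Finset ℕ // s.card = n}, ∏ i ∈ s.1,
      (1 : ℝ) / ((i : ℝ) + 1) ^ 2) = fun n ↦ π ^ (2 * n) / ((2 * n + 1).factorial : ℝ) from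
    congrFun h n
  refine eq_of_hasSum_mul_pow_eq (f := fun t ↦ sinh (π * √t) / (π * √t)) one_pos
    (fun t ht ↦ ?_) (fun t ht ↦ ?_)
  · have hw : Summable fun i : ℕ ↦ (1 : ℝ) / ((i : ℝ) + 1) ^ 2 := by
      simpa only [Nat.cast_one] using (summable_pow_div_add (1 : ℝ) 2 1 Nat.one_lt_two).of_norm
    have hprod := (hasProd_euler_sinh (sqrt_pos.2 ht.1).ne').tprod_eq
    have hsum := hasSum_tsum_finsetProd_card_mul_pow (fun i ↦ by positivity) hw ht.1.le
    simp only [sq_sqrt ht.1.le] at hprod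
    simpa only [mul_one_div, hprod] using hsum
  · refine (hasSum_sinh_div_self (mul_pos pi_pos (sqrt_pos.2 ht.1)).ne').congr_fun fun n ↦ ?_
    rw [mul_pow, pow_mul, pow_mul, sq_sqrt ht.1.le]
    ring

/-- `∑_{1 ≤ k₁ < ⋯ < kₙ} 1/(k₁² ⋯ kₙ²) = π^(2n)/(2n+1)!`; the sum over strictly
increasing tuples of positive integers is realized as a sum over finite sets of
cardinality `n` of natural indices, with index `i` corresponding to `i + 1`. -/
theorem multiple_sum_inv_squares (n : ℕ) (hn : 0 < n) :
    ∑' s : {s : Finset ℕ // s.card = n}, ∏ i ∈ s.1, (1 : ℝ) / ((i : ℝ) + 1) ^ 2 =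
      Real.pi ^ (2 * n) / ((2 * n + 1).factorial : ℝ) :=
  multiple_sum_inv_squares_general n
end
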